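/- arXiv:1907.01087 — 2 statements merged into one kernel-verified Lean document; each statement's English description precedes it below -/
import Mathlib

section
/- Set g′ = h′₄∘h′₁ and w′ = g′(e₂+e₃) − (e₂+e₃). Then w′ is a nonzero vector lying in the radical of B′, and for every natural number s one has (g′)ˢ(e₂+e₃) = (e₂+e₃) + s·w′; consequently g′ is an element of infinite order in the group of linear automorphisms of ℚ⁴. -/
open Matrix

/-- The Gram matrix of the intersection form on the subspace of `(−1)•`-invariant cycles
in the Milnor fibre of the corner singularity `x₁⁴ + x₂⁴ + y₁²` (the singularity `M₄`),
in the basis `δ₁ = Δ₁, δ₂ = Δ₂+Δ₄, δ₃ = Δ₃+Δ₅, δ₄ = Δ₆+Δ₇+Δ₈+Δ₉`. -/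
def G' : Matrix (Fin 4) (Fin 4) ℚ :=
  !![-2,  2,  2, -4;
      2, -4,  0,  4;
      2,  0, -4,  4;
     -4,  4,  4, -8]

/-- The associated symmetric bilinear form `B′(u,v) = uᵀG′v` on `ℚ⁴`. -/
def B' (u v : Fin 4 → ℚ) : ℚ := u ⬝ᵥ G'.mulVec v

/-- The standard basis `e₁, …, e₄` of `ℚ⁴` (0-indexed). -/
def e : Fin 4 → (Fin 4 → ℚ) := fun i => Pi.single i 1

/-- The reflection `h′ᵢ(a) = a − (2B′(a,eᵢ)/B′(eᵢ,eᵢ))·eᵢ` in the basis vector `eᵢ`. -/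
def h' (i : Fin 4) (a : Fin 4 → ℚ) : Fin 4 → ℚ :=
  a - (2 * B' a (e i) / B' (e i) (e i)) • e i

/-- The composition `g′ = h′₄∘h′₁` (written 0-indexed). -/
def g' : (Fin 4 → ℚ) → (Fin 4 → ℚ) := h' 3 ∘ h' 0

/-- The vector `w′ = g′(e₂+e₃) − (e₂+e₃)`. -/
def w' : Fin 4 → ℚ := g' (e 1 + e 2) - (e 1 + e 2)


lemma he : e = ![![1,0,0,0],![0,1,0,0],![0,0,1,0],![0,0,0,1]] := by
  funext i j; fin_cases i <;> fin_cases j <;> simp [e, Pi.single_apply] <;> rfl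

lemma hw : w' = ![4,0,0,-2] := by
  funext i
  fin_cases i <;>
    simp [w', g', h', B', he, G', Matrix.mulVec, dotProduct, Fin.sum_univ_four] <;>
    norm_num

lemma key (t : ℚ) : g' ((e 1 + e 2) + t • w') = (e 1 + e 2) + (t + 1) • w' := by
  funext i
  fin_cases i <;>
    simp [hw, g', h', B', he, G', Matrix.mulVec, dotProduct, Fin.sum_univ_four] <;>
    ring

/-- `w′` is a nonzero vector lying in the radical of `B′`, and for every natural number
`s` one has `(g′)ˢ(e₂+e₃) = (e₂+e₃) + s·w′`; consequently `g′` has infinite order in the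
group of linear automorphisms of `ℚ⁴`. -/
theorem g'_iterates_and_infinite_order :
    w' ≠ 0 ∧ (∀ x : Fin 4 → ℚ, B' w' x = 0) ∧
      (∀ s : ℕ, g'^[s] (e 1 + e 2) = (e 1 + e 2) + (s : ℚ) • w') ∧
      ∀ s : ℕ, 0 < s → g'^[s] ≠ id := by
  have hwne : w' ≠ 0 := by
    rw [hw]
    intro h
    have := congrFun h 0
    simp at this
  have hiter : ∀ s : ℕ, g'^[s] (e 1 + e 2) = (e 1 + e 2) + (s : ℚ) • w' := by
    intro s
    induction s with
    | zero => simp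
    | succ n ih =>
        rw [Function.iterate_succ_apply', ih]
        have := key (n : ℚ)
        push_cast
        rw [this]
  refine ⟨hwne, ?_, hiter, ?_⟩
  · intro x
    simp [hw, B', G', Matrix.mulVec, dotProduct, Fin.sum_univ_four]
    ring
  · intro s hs hid
    have h1 := hiter s
    rw [hid] at h1
    simp at h1
    rcases h1 with h1 | h1
    · exact absurd h1 (by exact_mod_cast hs.ne')
    · exact hwne h1
end

section
/- The subgroup of GL(ℚ⁴) generated by the four reflections h′₁, h′₂, h′₃, h′₄ is infinite (this is the equivariant monodromy group of the corner germ x₁⁴+x₂⁴+y₁² acting on the subspace of (−1)•-invariant cycles). -/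
open Matrix

def f1 : Function.End (Fin 4 → ℚ) := h' 0
def f3 : Function.End (Fin 4 → ℚ) := h' 3
def fM : Function.End (Fin 4 → ℚ) := f1 * f3

lemma fM_apply (a : Fin 4 → ℚ) : fM a = h' 0 (h' 3 a) := rfl

def vv : Fin 4 → ℚ := ![1, 0, 0, 0]
def ww : Fin 4 → ℚ := ![2, 0, 0, -1]

lemma e0 : e 0 = ![1,0,0,0] := by funext i; fin_cases i <;> simp [e]
lemma e3 : e 3 = ![0,0,0,1] := by funext i; fin_cases i <;> simp [e, Pi.single_apply]

lemma fM_step (c : ℚ) : fM (vv + c • ww) = vv + (c+1) • ww := by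
  rw [fM_apply]
  funext i
  fin_cases i <;>
    simp [h', B', G', e0, e3, vv, ww, Matrix.mulVec, dotProduct,
      Fin.sum_univ_four] <;> ring

lemma fM_pow (n : ℕ) : (fM ^ n) vv = vv + (n : ℚ) • ww := by
  induction n with
  | zero => show vv = vv + ((0:ℕ):ℚ) • ww; simp
  | succ n ih =>
      have h1 : (fM ^ (n+1)) vv = fM ((fM ^ n) vv) := by
        rw [pow_succ']; rfl
      rw [h1, ih, fM_step]
      push_cast; ring_nf

/-- The subgroup generated by the four reflections `h′₁, …, h′₄` (equivalently, since each
`h′ᵢ` is an involution, the submonoid of `Function.End (Fin 4 → ℚ)` they generate) is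
infinite: this is the equivariant monodromy group of the corner germ `x₁⁴+x₂⁴+y₁²` acting
on the subspace of `(−1)•`-invariant cycles. -/
theorem monodromy_group_infinite' :
    Set.Infinite
      ((Submonoid.closure {f : Function.End (Fin 4 → ℚ) | ∃ i : Fin 4, f = h' i} :
        Submonoid (Function.End (Fin 4 → ℚ))) : Set (Function.End (Fin 4 → ℚ))) := by
  apply Set.infinite_of_injective_forall_mem
    (f := fun n : ℕ => (fM ^ n : Function.End (Fin 4 → ℚ)))
  · intro m n hmn
    have h1 : (fM ^ m) vv 0 = (fM ^ n) vv 0 := by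
      simp only at hmn; rw [hmn]
    rw [fM_pow, fM_pow] at h1
    simp [vv, ww] at h1
    exact_mod_cast h1
  · intro n
    refine pow_mem (mul_mem ?_ ?_) n
    · exact Submonoid.subset_closure ⟨0, rfl⟩
    · exact Submonoid.subset_closure ⟨3, rfl⟩
end
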